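/- Under the degenerate series condition, the communication cost from the highest metastable state x₂ to each degenerate metastable state x₁ʳ equals Γ_m, that is, Φ(x₂, x₁ʳ) - H(x₂) = Γ_m for all r = 1,...,n. -/

import Mathlib

open Filter Topology
open scoped Classical

/-- Height along a path starting at `x` with subsequent states `l`. -/
def pathHeight {S : Type*} (H : S → ℝ) (Δ : S → S → ℝ) : S → List S → ℝ
  | x, [] => H x
  | x, y :: l => max (H x + Δ x y) (pathHeight H Δ y l)

/-- Communication height between two states. -/
noncomputable def commHeight {S : Type*} (H : S → ℝ) (Δ : S → S → ℝ) (x y : S) : ℝ :=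
  sInf {c | ∃ l : List S,
    (x :: l).getLast (List.cons_ne_nil x l) = y ∧ c = pathHeight H Δ x l}


/-- Communication height between a state and a set. -/
noncomputable def commSet {S : Type*} (H : S → ℝ) (Δ : S → S → ℝ) (x : S) (A : Set S) : ℝ :=
  sInf (commHeight H Δ x '' A)

/-- The states with energy strictly below that of `x`. -/
def Ibelow {S : Type*} (H : S → ℝ) (x : S) : Set S := {y | H y < H x}

/-- Stability level of a state. -/
noncomputable def stabLevel {S : Type*} (H : S → ℝ) (Δ : S → S → ℝ) (x : S) : ℝ :=
  commSet H Δ x (Ibelow H x) - H x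

/-- Ground states: global minima of the energy. -/
def stableSet {S : Type*} (H : S → ℝ) : Set S := {x | ∀ y, H x ≤ H y}

/-- Maximal stability level among non-stable states. -/
noncomputable def gammaM {S : Type*} (H : S → ℝ) (Δ : S → S → ℝ) : ℝ :=
  sSup (stabLevel H Δ '' (stableSet H)ᶜ)

/-- Metastable states: non-stable states attaining the maximal stability level. -/
def metaSet {S : Type*} (H : S → ℝ) (Δ : S → S → ℝ) : Set S :=
  {x | x ∉ stableSet H ∧ stabLevel H Δ x = gammaM H Δ}

/-!
The state `x₁ r` lies below `x₂`, so by the definition of the stability level of the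
metastable state `x₂` the cost of reaching it is at least `Γ_m`. Conversely, going from `x₂`
down to the ground state `x₀` and then, by reversibility, back up to `x₁ r` costs at most
`max (H x₂ + Γ_m) (H (x₁ r) + Γ_m) = H x₂ + Γ_m`.
-/

lemma List.getLast_cons_append_singleton {α : Type*} {x y : α} {l : List α} :
    (x :: (l ++ [y])).getLast (List.cons_ne_nil _ _) = y := by
  simp

lemma List.getLast_cons_append {α : Type*} (x : α) :
    ∀ l₁ l₂ : List α, (x :: (l₁ ++ l₂)).getLast (List.cons_ne_nil _ _) =
      ((x :: l₁).getLast (List.cons_ne_nil _ _) :: l₂).getLast (List.cons_ne_nil _ _)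
  | [], _ => rfl
  | y :: l₁, l₂ => by
    simp only [List.cons_append, List.getLast_cons_cons]
    exact List.getLast_cons_append y l₁ l₂

section CommHeight

variable {S : Type*} (H : S → ℝ) (Δ : S → S → ℝ)

lemma self_le_pathHeight (hΔ : ∀ x y, 0 ≤ Δ x y) :
    ∀ (x : S) (l : List S), H x ≤ pathHeight H Δ x l
  | _, [] => le_rfl
  | x, y :: _ => le_max_of_le_left (le_add_of_nonneg_right (hΔ x y))

lemma pathHeight_append (hΔ : ∀ x y, 0 ≤ Δ x y) :
    ∀ (x : S) (l₁ l₂ : List S), pathHeight H Δ x (l₁ ++ l₂) =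
      max (pathHeight H Δ x l₁) (pathHeight H Δ ((x :: l₁).getLast (List.cons_ne_nil x l₁)) l₂)
  | x, [], l₂ => (max_eq_right (self_le_pathHeight H Δ hΔ x l₂)).symm
  | x, y :: l₁, l₂ => by
    simp only [List.cons_append, pathHeight, List.getLast_cons_cons,
      pathHeight_append hΔ y l₁ l₂, max_assoc]

lemma pathHeight_singleton_eq_reverse (hΔ : ∀ x y, 0 ≤ Δ x y)
    (hrev : ∀ x y, H x + Δ x y = H y + Δ y x) (x y : S) :
    pathHeight H Δ y [x] = H x + Δ x y := by
  rw [pathHeight, pathHeight, ← hrev]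
  exact max_eq_left (le_add_of_nonneg_right (hΔ x y))

lemma pathHeight_reverse_concat (hΔ : ∀ x y, 0 ≤ Δ x y)
    (hrev : ∀ x y, H x + Δ x y = H y + Δ y x) (y : S) :
    ∀ (x : S) (l : List S), pathHeight H Δ y (l.reverse ++ [x]) = pathHeight H Δ x (l ++ [y])
  | x, [] => by
    rw [List.reverse_nil, List.nil_append, List.nil_append,
      pathHeight_singleton_eq_reverse H Δ hΔ hrev, ← hrev, pathHeight_singleton_eq_reverse H Δ hΔ hrev]
  | x, z :: l => by
    rw [List.reverse_cons, List.append_assoc, ← List.append_assoc, pathHeight_append H Δ hΔ,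
      List.getLast_cons_append_singleton, pathHeight_reverse_concat hΔ hrev y z l,
      pathHeight_singleton_eq_reverse H Δ hΔ hrev, List.cons_append, pathHeight, max_comm]

lemma exists_reverse_path (hΔ : ∀ x y, 0 ≤ Δ x y) (hrev : ∀ x y, H x + Δ x y = H y + Δ y x)
    {x y : S} {l : List S} (hl : (x :: l).getLast (List.cons_ne_nil x l) = y) :
    ∃ l' : List S, (y :: l').getLast (List.cons_ne_nil y l') = x ∧
      pathHeight H Δ y l' = pathHeight H Δ x l := by
  rcases List.eq_nil_or_concat l with rfl | ⟨l₀, z, rfl⟩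
  · exact ⟨[], hl.symm, by rw [← hl]; rfl⟩
  · rw [List.concat_eq_append] at hl ⊢
    rw [List.getLast_cons_append_singleton] at hl
    subst hl
    exact ⟨l₀.reverse ++ [x], List.getLast_cons_append_singleton,
      pathHeight_reverse_concat H Δ hΔ hrev z x l₀⟩

lemma commHeight_set_nonempty (x y : S) :
    {c | ∃ l : List S, (x :: l).getLast (List.cons_ne_nil x l) = y ∧
      c = pathHeight H Δ x l}.Nonempty :=
  ⟨_, [y], rfl, rfl⟩

lemma commHeight_le_pathHeight (hΔ : ∀ x y, 0 ≤ Δ x y) {x y : S} {l : List S}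
    (hl : (x :: l).getLast (List.cons_ne_nil x l) = y) :
    commHeight H Δ x y ≤ pathHeight H Δ x l :=
  csInf_le ⟨H x, by rintro c ⟨l, -, rfl⟩; exact self_le_pathHeight H Δ hΔ x l⟩ ⟨l, hl, rfl⟩

lemma self_le_commHeight (hΔ : ∀ x y, 0 ≤ Δ x y) (x y : S) : H x ≤ commHeight H Δ x y :=
  le_csInf (commHeight_set_nonempty H Δ x y) <| by
    rintro c ⟨l, -, rfl⟩; exact self_le_pathHeight H Δ hΔ x l

lemma exists_pathHeight_lt (x y : S) {c : ℝ} (hc : commHeight H Δ x y < c) :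
    ∃ l : List S, (x :: l).getLast (List.cons_ne_nil x l) = y ∧ pathHeight H Δ x l < c := by
  obtain ⟨_, ⟨l, hl, rfl⟩, hlt⟩ := exists_lt_of_csInf_lt (commHeight_set_nonempty H Δ x y) hc
  exact ⟨l, hl, hlt⟩

lemma commHeight_comm (hΔ : ∀ x y, 0 ≤ Δ x y) (hrev : ∀ x y, H x + Δ x y = H y + Δ y x)
    (x y : S) : commHeight H Δ x y = commHeight H Δ y x := by
  have key : ∀ x y : S, commHeight H Δ x y ≤ commHeight H Δ y x := fun x y =>
    le_csInf (commHeight_set_nonempty H Δ y x) <| by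
      rintro c ⟨l, hl, rfl⟩
      obtain ⟨l', hl', hh⟩ := exists_reverse_path H Δ hΔ hrev hl
      exact hh ▸ commHeight_le_pathHeight H Δ hΔ hl'
  exact le_antisymm (key x y) (key y x)

lemma commHeight_le_max (hΔ : ∀ x y, 0 ≤ Δ x y) (x y z : S) :
    commHeight H Δ x z ≤ max (commHeight H Δ x y) (commHeight H Δ y z) := by
  refine le_of_forall_pos_le_add fun ε hε => ?_
  obtain ⟨l₁, hl₁, h₁⟩ := exists_pathHeight_lt H Δ x y (lt_add_of_pos_right _ hε)
  obtain ⟨l₂, hl₂, h₂⟩ := exists_pathHeight_lt H Δ y z (lt_add_of_pos_right _ hε)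
  have hl : (x :: (l₁ ++ l₂)).getLast (List.cons_ne_nil _ _) = z := by
    rw [List.getLast_cons_append, hl₁, hl₂]
  calc commHeight H Δ x z ≤ pathHeight H Δ x (l₁ ++ l₂) := commHeight_le_pathHeight H Δ hΔ hl
    _ = max (pathHeight H Δ x l₁) (pathHeight H Δ y l₂) := by
        rw [pathHeight_append H Δ hΔ, hl₁]
    _ ≤ max (commHeight H Δ x y + ε) (commHeight H Δ y z + ε) := max_le_max h₁.le h₂.le
    _ = max (commHeight H Δ x y) (commHeight H Δ y z) + ε := max_add_add_right _ _ _

lemma stabLevel_le_commHeight_sub (hΔ : ∀ x y, 0 ≤ Δ x y) {x y : S} (hy : H y < H x) :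
    stabLevel H Δ x ≤ commHeight H Δ x y - H x := by
  have hbdd : BddBelow (commHeight H Δ x '' Ibelow H x) :=
    ⟨H x, by rintro c ⟨z, -, rfl⟩; exact self_le_commHeight H Δ hΔ x z⟩
  exact sub_le_sub_right (csInf_le hbdd ⟨y, hy, rfl⟩) _

end CommHeight

theorem comm_cost_x2_to_x1_eq_gammaM_general {S : Type*}
    (H : S → ℝ) (Δ : S → S → ℝ)
    (hΔ : ∀ x y, 0 ≤ Δ x y) (hrev : ∀ x y, H x + Δ x y = H y + Δ y x)
    (n : ℕ) (x₀ x₂ : S) (x₁ : Fin n → S)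
    (hM : metaSet H Δ = insert x₂ (Set.range x₁))
    (hE2 : ∀ r, H (x₁ r) < H x₂)
    (hK2 : commHeight H Δ x₂ x₀ - H x₂ = gammaM H Δ)
    (hK1 : ∀ r, commHeight H Δ (x₁ r) x₀ - H (x₁ r) = gammaM H Δ) :
    ∀ r, commHeight H Δ x₂ (x₁ r) - H x₂ = gammaM H Δ := by
  intro r
  have hstab : stabLevel H Δ x₂ = gammaM H Δ := (hM ▸ Set.mem_insert x₂ _ : x₂ ∈ metaSet H Δ).2
  have hlow := stabLevel_le_commHeight_sub H Δ hΔ (hE2 r)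
  have hup : commHeight H Δ x₂ (x₁ r) ≤ max (commHeight H Δ x₂ x₀) (commHeight H Δ (x₁ r) x₀) :=
    commHeight_comm H Δ hΔ hrev x₀ (x₁ r) ▸ commHeight_le_max H Δ hΔ x₂ x₀ (x₁ r)
  have hmax : max (commHeight H Δ x₂ x₀) (commHeight H Δ (x₁ r) x₀) ≤ H x₂ + gammaM H Δ :=
    max_le (by linarith) (by linarith [hE2 r, hK1 r])
  linarith

/-- Under the degenerate series condition, the communication cost from `x₂` to each
degenerate metastable state `x₁ r` equals `Γ_m`. -/
theorem comm_cost_x2_to_x1_eq_gammaM {S : Type*} [Fintype S]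
    (H : S → ℝ) (Δ : S → S → ℝ)
    (hΔ : ∀ x y, 0 ≤ Δ x y) (hrev : ∀ x y, H x + Δ x y = H y + Δ y x)
    (n : ℕ) (hn : 1 ≤ n) (x₀ x₂ : S) (x₁ : Fin n → S)
    (hinj : Function.Injective x₁)
    (hS : stableSet H = {x₀})
    (hM : metaSet H Δ = insert x₂ (Set.range x₁))
    (hE2 : ∀ r, H (x₁ r) < H x₂)
    (hEq : ∀ r q, H (x₁ r) = H (x₁ q))
    (hBar : ∀ r q, commHeight H Δ (x₁ r) (x₁ q) - H (x₁ r) < gammaM H Δ)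
    (hK2 : commHeight H Δ x₂ x₀ - H x₂ = gammaM H Δ)
    (hK1 : ∀ r, commHeight H Δ (x₁ r) x₀ - H (x₁ r) = gammaM H Δ) :
    ∀ r, commHeight H Δ x₂ (x₁ r) - H x₂ = gammaM H Δ :=
  comm_cost_x2_to_x1_eq_gammaM_general H Δ hΔ hrev n x₀ x₂ x₁ hM hE2 hK2 hK1
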